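/- arXiv:0906.5375 — 2 statements merged into one kernel-verified Lean document; each statement's English description precedes it below -/
import Mathlib

section
/- Suppose P preserves Lebesgue integrals (∫ Pf dλ = ∫ f dλ for all f ∈ L¹), P_H f = P(f·χ_{[0,1]\H}), and P_H f*_H = e_H f*_H with f*_H ≥ 0, ∫ f*_H dλ = 1, and ‖f*_H‖_{BV} ≤ M. Then 1 − e_H ≤ M·λ(H). -/
open MeasureTheory Set ENNReal

noncomputable def bvVar (f : ℝ → ℝ) : ℝ≥0∞ := eVariationOn f (Set.Icc 0 1)

noncomputable def l1Norm (f : ℝ → ℝ) : ℝ≥0∞ := ∫⁻ x in Set.Icc (0:ℝ) 1, (‖f x‖₊ : ℝ≥0∞)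

/-!
Integrating the eigenvalue equation `P_H f = e_H f` and using that `P` preserves integrals gives
`e_H = ∫_{[0,1] \ H} f`, so the escaping mass is `1 - e_H = ∫_H f`. Since `|f|` is bounded by its
BV norm, which is at most `M`, this is at most `M λ(H)`.
-/

/-- `heig` says that `f` is an eigenfunction of the open system `P_H g = P (g · 1_{K \ H})`
with hole `H`. -/
theorem setIntegral_hole_eq_of_eigen {α : Type*} [MeasurableSpace α] {μ : Measure α}
    {P : (α → ℝ) → α → ℝ} {K H : Set α} (hP : ∀ g, ∫ x in K, P g x ∂μ = ∫ x in K, g x ∂μ)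
    (hK : MeasurableSet K) (hH : MeasurableSet H) (hHK : H ⊆ K) {f : α → ℝ}
    (hf : IntegrableOn f K μ) {e : ℝ}
    (heig : P ((K \ H).indicator f) = fun x => e * f x) :
    ∫ x in H, f x ∂μ = (1 - e) * ∫ x in K, f x ∂μ := by
  have hmass : e * ∫ x in K, f x ∂μ = ∫ x in K, f x ∂μ - ∫ x in H, f x ∂μ := by
    rw [← integral_const_mul, ← heig, hP, setIntegral_indicator (hK.diff hH),
      inter_eq_self_of_subset_right sdiff_subset, setIntegral_sdiff hH hf hHK]
  linarith

theorem enorm_mul_le_eVariationOn_mul_add_setLIntegral {α E : Type*} [LinearOrder α]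
    [MeasurableSpace α] [SeminormedAddCommGroup E] (f : α → E) (μ : Measure α) {s : Set α}
    (hs : MeasurableSet s) {x : α} (hx : x ∈ s) :
    ‖f x‖ₑ * μ s ≤ eVariationOn f s * μ s + ∫⁻ y in s, ‖f y‖ₑ ∂μ := by
  have hpt : ∀ y ∈ s, ‖f x‖ₑ ≤ eVariationOn f s + ‖f y‖ₑ := fun y hy => by
    simpa only [edist_zero_right] using
      (edist_triangle (f x) (f y) 0).trans (add_le_add_left (eVariationOn.edist_le f hx hy) _)
  calc ‖f x‖ₑ * μ s = ∫⁻ _ in s, ‖f x‖ₑ ∂μ := (setLIntegral_const s _).symm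
    _ ≤ ∫⁻ y in s, (eVariationOn f s + ‖f y‖ₑ) ∂μ := setLIntegral_mono' hs hpt
    _ = eVariationOn f s * μ s + ∫⁻ y in s, ‖f y‖ₑ ∂μ := by
      rw [lintegral_add_left measurable_const, setLIntegral_const]

theorem enorm_le_bvVar_add_l1Norm (f : ℝ → ℝ) {x : ℝ} (hx : x ∈ Icc (0 : ℝ) 1) :
    ‖f x‖ₑ ≤ bvVar f + l1Norm f := by
  have h := enorm_mul_le_eVariationOn_mul_add_setLIntegral f volume measurableSet_Icc hx
  rwa [Real.volume_Icc, sub_zero, ofReal_one, mul_one, mul_one] at h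

theorem escape_rate_upper_bound_general
    (P : (ℝ → ℝ) →ₗ[ℝ] (ℝ → ℝ))
    (hint : ∀ g : ℝ → ℝ, ∫ x in Set.Icc (0:ℝ) 1, P g x = ∫ x in Set.Icc (0:ℝ) 1, g x)
    (a b : ℝ) (hab : Set.Ioo a b ⊆ Set.Icc 0 1)
    (fH : ℝ → ℝ) (eH M : ℝ)
    (hnorm : ∫ x in Set.Icc (0:ℝ) 1, fH x = 1)
    (heig : P ((Set.Icc (0:ℝ) 1 \ Set.Ioo a b).indicator fH) = fun x => eH * fH x)
    (hM : bvVar fH + l1Norm fH ≤ ENNReal.ofReal M) :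
    1 - eH ≤ M * (volume (Set.Ioo a b)).toReal := by
  have hf : IntegrableOn fH (Icc 0 1) := Integrable.of_integral_ne_zero (by simp [hnorm])
  have hescape : ∫ x in Ioo a b, fH x = 1 - eH := by
    simpa [hnorm] using
      setIntegral_hole_eq_of_eigen hint measurableSet_Icc measurableSet_Ioo hab hf heig
  have hM0 : 0 ≤ M := by
    have h1 : (1 : ℝ≥0∞) ≤ ENNReal.ofReal M := by
      simpa [hnorm] using (enorm_integral_le_lintegral_enorm fH).trans (le_add_self.trans hM)
    linarith [ENNReal.one_le_ofReal.1 h1]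
  have hbound : ∀ x ∈ Ioo a b, ‖fH x‖ ≤ M := fun x hx => by
    rw [← ENNReal.ofReal_le_ofReal_iff hM0, ofReal_norm]
    exact (enorm_le_bvVar_add_l1Norm fH (hab hx)).trans hM
  calc 1 - eH ≤ ‖∫ x in Ioo a b, fH x‖ := hescape ▸ Real.le_norm_self _
    _ ≤ M * (volume (Ioo a b)).toReal :=
      norm_setIntegral_le_of_norm_le_const (by simp [Real.volume_Ioo]) hbound

/-- if `P` preserves Lebesgue integrals, `P_H f = P(f·χ_{[0,1]\H})`, and
`P_H f*_H = e_H f*_H` with `f*_H ≥ 0`, `∫ f*_H dλ = 1` and `‖f*_H‖_BV ≤ M`, then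
`1 − e_H ≤ M · λ(H)`. -/
theorem escape_rate_upper_bound
    (P : (ℝ → ℝ) →ₗ[ℝ] (ℝ → ℝ))
    (hint : ∀ g : ℝ → ℝ, ∫ x in Set.Icc (0:ℝ) 1, P g x = ∫ x in Set.Icc (0:ℝ) 1, g x)
    (a b : ℝ) (hab : Set.Ioo a b ⊆ Set.Icc 0 1)
    (fH : ℝ → ℝ) (eH M : ℝ) (heH0 : 0 < eH) (heH1 : eH ≤ 1)
    (hpos : ∀ x, 0 ≤ fH x) (hnorm : ∫ x in Set.Icc (0:ℝ) 1, fH x = 1)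
    (heig : P ((Set.Icc (0:ℝ) 1 \ Set.Ioo a b).indicator fH) = fun x => eH * fH x)
    (hM : bvVar fH + l1Norm fH ≤ ENNReal.ofReal M) :
    1 - eH ≤ M * (volume (Set.Ioo a b)).toReal :=
  escape_rate_upper_bound_general P hint a b hab fH eH M hnorm heig hM
end

section
/- Combining the previous two results: if P_H f*_H = e_H f*_H with e_H ≥ 1 − ℓ > α = 3α₀, f*_H ≥ 0 a probability density, then 1 − e_H ≤ (1 + (2α₀ + B₀)/(1 − ℓ − α))·λ(H). -/
/-!
Integrating `P_H f*_H = e_H f*_H` over `[0,1]` gives `1 - e_H = ∫_H f*_H ≤ (sup f*_H) λ(H)`, and a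
probability density on `[0,1]` satisfies `sup f ≤ 1 + V(f)`. Cutting the hole `H` out of `f*_H` adds
at most `2 sup f*_H` to its variation, so the Lasota–Yorke inequality for `P(f*_H χ_{[0,1]\H})`
yields `e_H V ≤ α₀ (3V + 2) + B₀`, that is `V ≤ (2α₀ + B₀)/(e_H - 3α₀) ≤ (2α₀ + B₀)/(1 - ℓ - 3α₀)`.
-/

open MeasureTheory Set ENNReal

open Filter

theorem eVariationOn_const_smul {α 𝕜 E : Type*} [LinearOrder α] [NormedField 𝕜]
    [SeminormedAddCommGroup E] [NormedSpace 𝕜 E] (c : 𝕜) (f : α → E) (s : Set α) :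
    eVariationOn (c • f) s = ‖c‖ₑ * eVariationOn f s := by
  simp only [eVariationOn, ENNReal.mul_iSup, Finset.mul_sum, Pi.smul_apply, edist_smul₀]
  rfl

theorem BoundedVariationOn.integrableOn_of_isCompact {μ : Measure ℝ} [IsFiniteMeasureOnCompacts μ]
    {f : ℝ → ℝ} {s : Set ℝ} (hf : BoundedVariationOn f s) (hs : IsCompact s) :
    IntegrableOn f s μ := by
  obtain ⟨p, q, hp, hq, rfl⟩ := hf.locallyBoundedVariationOn.exists_monotoneOn_sub_monotoneOn
  exact (hp.integrableOn_isCompact hs).sub (hq.integrableOn_isCompact hs)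

theorem BoundedVariationOn.le_setIntegral_add {α : Type*} [LinearOrder α] [MeasurableSpace α]
    {μ : Measure α} {f : α → ℝ} {s : Set α} (hf : BoundedVariationOn f s)
    (hfi : IntegrableOn f s μ) (hs : MeasurableSet s) (hμs : μ s = 1) {x : α} (hx : x ∈ s) :
    f x ≤ ∫ y in s, f y ∂μ + (eVariationOn f s).toReal := by
  have : IsProbabilityMeasure (μ.restrict s) := ⟨by rw [Measure.restrict_apply_univ, hμs]⟩
  have := integral_mono_ae (integrable_const (f x - (eVariationOn f s).toReal)) hfi
    (ae_restrict_of_forall_mem hs fun y hy => by linarith [hf.sub_le hx hy])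
  simp only [integral_const, probReal_univ, one_smul] at this
  linarith

theorem eVariationOn_Icc_eq_of_eqOn_Ioo_zero {E : Type*} [NormedAddCommGroup E] {g : ℝ → E}
    {a b : ℝ} (hab : a < b) (hg : EqOn g 0 (Ioo a b)) :
    eVariationOn g (Icc a b) = ‖g a‖ₑ + ‖g b‖ₑ := by
  have hg' : ∀ x ∈ Ioo a b, 0 = g x := fun x hx => (hg hx).symm
  have hright := eVariationOn.eVariationOn_on_inter_Iic_eq_Iio_add_edist (f := g) (s := Ici a)
    (l := 0) (by rw [Ici_inter_Iio]; exact right_nhdsWithin_Ico_neBot hab) (mem_Ici.2 hab.le)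
    (tendsto_const_nhds.congr' (eventually_of_mem
      (nhdsWithin_mono _ inter_subset_right (Ioo_mem_nhdsLT hab)) hg'))
  have hleft := eVariationOn.eVariationOn_on_inter_Ici_eq_Ioi_add_edist (f := g) (s := Iio b)
    (l := 0) (by rw [Iio_inter_Ioi]; exact left_nhdsWithin_Ioo_neBot hab) (mem_Iio.2 hab)
    (tendsto_const_nhds.congr' (eventually_of_mem
      (nhdsWithin_mono _ inter_subset_right (Ioo_mem_nhdsGT hab)) hg'))
  have hIoo : eVariationOn g (Ioo a b) = 0 :=
    (eVariationOn.eq_zero_iff g).2 fun x hx y hy => by simp [hg hx, hg hy]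
  rw [Ici_inter_Iic, Ici_inter_Iio] at hright
  rw [Iio_inter_Ici, Iio_inter_Ioi, hIoo] at hleft
  rw [hright, hleft, zero_add, edist_zero_right, edist_zero_right]

theorem eVariationOn_indicator_Icc_diff_Ioo_le {E : Type*} [NormedAddCommGroup E] {f : ℝ → E}
    {a b c d : ℝ} {M : ℝ≥0∞} (h : Ioo a b ⊆ Icc c d) (hM : ∀ x ∈ Icc c d, ‖f x‖ₑ ≤ M) :
    eVariationOn ((Icc c d \ Ioo a b).indicator f) (Icc c d) ≤
      eVariationOn f (Icc c d) + 2 * M := by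
  set g := (Icc c d \ Ioo a b).indicator f
  rcases le_or_gt b a with hba | hab
  · have hg : EqOn g f (Icc c d) := fun x hx => by simp [g, Ioo_eq_empty (not_lt.2 hba), hx]
    exact (eVariationOn.eq_of_eqOn hg).trans_le le_self_add
  obtain ⟨hca, hbd⟩ := (Icc_subset_Icc_iff hab.le).1
    (closure_Ioo hab.ne ▸ closure_minimal h isClosed_Icc)
  have hg : EqOn g f (Icc c a ∪ Icc b d) := by
    rintro x (hx | hx) <;> refine indicator_of_mem (s := Icc c d \ Ioo a b) ⟨⟨?_, ?_⟩, ?_⟩ f <;>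
      first | linarith [hx.1, hx.2] | exact fun hx' => by linarith [hx.1, hx.2, hx'.1, hx'.2]
  have hmid : eVariationOn g (Icc a b) = ‖f a‖ₑ + ‖f b‖ₑ := by
    rw [← hg (.inl (right_mem_Icc.2 hca)), ← hg (.inr (left_mem_Icc.2 hbd))]
    exact eVariationOn_Icc_eq_of_eqOn_Ioo_zero hab fun x hx => indicator_of_notMem
      (fun hx' => hx'.2 hx) f
  have hsplit : eVariationOn g (Icc c d) =
      eVariationOn g (Icc c a) + eVariationOn g (Icc a b) + eVariationOn g (Icc b d) := by
    have h₁ := eVariationOn.Icc_add_Icc g (s := univ) hca hab.le (mem_univ a)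
    have h₂ := eVariationOn.Icc_add_Icc g (s := univ) (hca.trans hab.le) hbd (mem_univ b)
    simp only [univ_inter] at h₁ h₂
    rw [← h₂, ← h₁]
  have hfsplit : eVariationOn f (Icc c a) + eVariationOn f (Icc b d) ≤ eVariationOn f (Icc c d) :=
    (eVariationOn.add_le_union f fun x hx y hy => by linarith [hx.2, hy.1, hab]).trans
      (eVariationOn.mono f (union_subset (Icc_subset_Icc le_rfl (hab.le.trans hbd))
        (Icc_subset_Icc (hca.trans hab.le) le_rfl)))
  calc eVariationOn g (Icc c d)
      = eVariationOn f (Icc c a) + eVariationOn f (Icc b d) + (‖f a‖ₑ + ‖f b‖ₑ) := by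
        rw [hsplit, hmid, eVariationOn.eq_of_eqOn (hg.mono subset_union_left),
          eVariationOn.eq_of_eqOn (hg.mono subset_union_right)]
        ring
    _ ≤ eVariationOn f (Icc c d) + 2 * M := by
        rw [two_mul]
        gcongr
        · exact hM a ⟨hca, hab.le.trans hbd⟩
        · exact hM b ⟨hca.trans hab.le, hbd⟩

theorem l1Norm_indicator_le (s : Set ℝ) (f : ℝ → ℝ) : l1Norm (s.indicator f) ≤ l1Norm f :=
  lintegral_mono fun _ => enorm_indicator_le_enorm_self f _

theorem l1Norm_eq_ofReal_integral {f : ℝ → ℝ} (hf : IntegrableOn f (Icc 0 1))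
    (hpos : ∀ x ∈ Icc (0:ℝ) 1, 0 ≤ f x) :
    l1Norm f = ENNReal.ofReal (∫ x in Icc (0:ℝ) 1, f x) := by
  rw [ofReal_integral_eq_lintegral_ofReal hf (ae_restrict_of_forall_mem measurableSet_Icc hpos)]
  exact setLIntegral_congr_fun measurableSet_Icc fun x hx => Real.enorm_eq_ofReal (hpos x hx)

theorem BoundedVariationOn.bvVar_indicator_diff_Ioo_le {f : ℝ → ℝ} {a b M : ℝ}
    (hf : BoundedVariationOn f (Icc 0 1)) (hab : Ioo a b ⊆ Icc 0 1)
    (hM : ∀ x ∈ Icc (0:ℝ) 1, |f x| ≤ M) :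
    bvVar ((Icc 0 1 \ Ioo a b).indicator f) ≤ ENNReal.ofReal ((bvVar f).toReal + 2 * M) := by
  have hM₀ : 0 ≤ M := (abs_nonneg _).trans (hM 0 (left_mem_Icc.2 zero_le_one))
  refine (eVariationOn_indicator_Icc_diff_Ioo_le (M := ENNReal.ofReal M) hab
    fun x hx => ?_).trans_eq ?_
  · rw [← ofReal_norm]
    exact ENNReal.ofReal_le_ofReal (hM x hx)
  · rw [ENNReal.ofReal_add ENNReal.toReal_nonneg (by positivity), ENNReal.ofReal_mul zero_le_two,
      ENNReal.ofReal_ofNat, bvVar, ENNReal.ofReal_toReal hf]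

theorem one_sub_eigenvalue_eq_setIntegral {P : (ℝ → ℝ) →ₗ[ℝ] (ℝ → ℝ)}
    (hint : ∀ g : ℝ → ℝ, ∫ x in Icc (0:ℝ) 1, P g x = ∫ x in Icc (0:ℝ) 1, g x)
    {a b e : ℝ} (hab : Ioo a b ⊆ Icc 0 1) {f : ℝ → ℝ} (hf : IntegrableOn f (Icc 0 1))
    (hnorm : ∫ x in Icc (0:ℝ) 1, f x = 1)
    (heig : P ((Icc (0:ℝ) 1 \ Ioo a b).indicator f) = fun x => e * f x) :
    1 - e = ∫ x in Ioo a b, f x := by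
  have := hint ((Icc 0 1 \ Ioo a b).indicator f)
  rw [heig, integral_const_mul, hnorm, setIntegral_indicator (measurableSet_Icc.diff
    measurableSet_Ioo), inter_eq_self_of_subset_right sdiff_subset,
    setIntegral_sdiff measurableSet_Ioo hf hab, hnorm] at this
  linarith

theorem eigenvalue_mul_toReal_bvVar_le {P : (ℝ → ℝ) →ₗ[ℝ] (ℝ → ℝ)} {α₀ B₀ : ℝ}
    (hα₀ : 0 ≤ α₀) (hB₀ : 0 ≤ B₀)
    (hLY : ∀ f, bvVar (P f) ≤ ENNReal.ofReal α₀ * bvVar f + ENNReal.ofReal B₀ * l1Norm f)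
    {f g : ℝ → ℝ} {e C L : ℝ} (he : 0 ≤ e) (hC : 0 ≤ C) (hL : 0 ≤ L)
    (heig : P g = fun x => e * f x) (hgV : bvVar g ≤ ENNReal.ofReal C)
    (hgL : l1Norm g ≤ ENNReal.ofReal L) :
    e * (bvVar f).toReal ≤ α₀ * C + B₀ * L := by
  rw [← ENNReal.ofReal_le_ofReal_iff (by positivity)]
  calc ENNReal.ofReal (e * (bvVar f).toReal) ≤ ENNReal.ofReal e * bvVar f := by
        rw [ENNReal.ofReal_mul he]
        gcongr
        exact ENNReal.ofReal_toReal_le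
    _ = bvVar (P g) := by
        rw [heig, ← Real.enorm_eq_ofReal he, bvVar, bvVar, ← eVariationOn_const_smul]
        rfl
    _ ≤ ENNReal.ofReal α₀ * bvVar g + ENNReal.ofReal B₀ * l1Norm g := hLY g
    _ ≤ ENNReal.ofReal α₀ * ENNReal.ofReal C + ENNReal.ofReal B₀ * ENNReal.ofReal L := by gcongr
    _ = ENNReal.ofReal (α₀ * C + B₀ * L) := by
        rw [ENNReal.ofReal_add (by positivity) (by positivity), ENNReal.ofReal_mul hα₀,
          ENNReal.ofReal_mul hB₀]

theorem escape_rate_explicit_bound_general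
    (P : (ℝ → ℝ) →ₗ[ℝ] (ℝ → ℝ)) (α₀ B₀ ℓ : ℝ)
    (hα₀ : 0 < α₀) (hB₀ : 0 ≤ B₀)
    (hLY : ∀ f, bvVar (P f) ≤ ENNReal.ofReal α₀ * bvVar f + ENNReal.ofReal B₀ * l1Norm f)
    (hint : ∀ g : ℝ → ℝ, ∫ x in Set.Icc (0:ℝ) 1, P g x = ∫ x in Set.Icc (0:ℝ) 1, g x)
    (a b : ℝ) (hab : Set.Ioo a b ⊆ Set.Icc 0 1)
    (fH : ℝ → ℝ) (eH : ℝ)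
    (hℓ : ℓ < 1 - 3 * α₀)
    (hpos : ∀ x, 0 ≤ fH x) (hbv : BoundedVariationOn fH (Set.Icc 0 1))
    (hnorm : ∫ x in Set.Icc (0:ℝ) 1, fH x = 1)
    (heig : P ((Set.Icc (0:ℝ) 1 \ Set.Ioo a b).indicator fH) = fun x => eH * fH x)
    (heH : 1 - ℓ ≤ eH) :
    1 - eH ≤ (1 + (2 * α₀ + B₀) / (1 - ℓ - 3 * α₀)) * (volume (Set.Ioo a b)).toReal := by
  set I := Icc (0:ℝ) 1
  set V := (bvVar fH).toReal
  have hfH : IntegrableOn fH I := hbv.integrableOn_of_isCompact isCompact_Icc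
  have hsup : ∀ x ∈ I, fH x ≤ 1 + V := fun x hx =>
    (hbv.le_setIntegral_add hfH measurableSet_Icc (by simp [I]) hx).trans_eq (by rw [hnorm]; rfl)
  have hvar := hbv.bvVar_indicator_diff_Ioo_le hab fun x hx =>
    (abs_of_nonneg (hpos x)).trans_le (hsup x hx)
  have hl1 : l1Norm ((I \ Ioo a b).indicator fH) ≤ ENNReal.ofReal 1 :=
    hnorm ▸ (l1Norm_indicator_le _ _).trans (l1Norm_eq_ofReal_integral hfH fun x _ => hpos x).le
  have hV : eH * V ≤ α₀ * (V + 2 * (1 + V)) + B₀ * 1 :=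
    eigenvalue_mul_toReal_bvVar_le hα₀.le hB₀ hLY (by linarith) (by positivity) zero_le_one
      heig hvar hl1
  calc 1 - eH = ∫ x in Ioo a b, fH x := one_sub_eigenvalue_eq_setIntegral hint hab hfH hnorm heig
    _ ≤ ∫ _ in Ioo a b, (1 + V) := setIntegral_mono_on (hfH.mono_set hab)
        (integrableOn_const (by simp)) measurableSet_Ioo fun x hx => hsup x (hab hx)
    _ = (1 + V) * (volume (Ioo a b)).toReal := by
        rw [setIntegral_const, smul_eq_mul, mul_comm, measureReal_def]
    _ ≤ _ := by
        gcongr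
        rw [le_div_iff₀ (by linarith)]
        nlinarith [mul_le_mul_of_nonneg_right heH (ENNReal.toReal_nonneg : 0 ≤ V)]

/-- if `P` is a Perron–Frobenius-type operator satisfying a Lasota–Yorke
inequality with `α₀ < 1/3`, `P_H f = P(f·χ_{[0,1]\H})`, and `P_H f*_H = e_H f*_H` with
`f*_H ≥ 0` a probability density and `e_H ≥ 1 − ℓ > α = 3α₀`, then
`1 − e_H ≤ (1 + (2α₀+B₀)/(1 − ℓ − α)) · λ(H)`. -/
theorem escape_rate_explicit_bound
    (P : (ℝ → ℝ) →ₗ[ℝ] (ℝ → ℝ)) (α₀ B₀ ℓ : ℝ)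
    (hα₀ : 0 < α₀) (hα₁ : α₀ < 1/3) (hB₀ : 0 ≤ B₀)
    (hLY : ∀ f, bvVar (P f) ≤ ENNReal.ofReal α₀ * bvVar f + ENNReal.ofReal B₀ * l1Norm f)
    (hL1 : ∀ g, l1Norm (P g) ≤ l1Norm g)
    (hint : ∀ g : ℝ → ℝ, ∫ x in Set.Icc (0:ℝ) 1, P g x = ∫ x in Set.Icc (0:ℝ) 1, g x)
    (a b : ℝ) (hab : Set.Ioo a b ⊆ Set.Icc 0 1)
    (fH : ℝ → ℝ) (eH : ℝ)
    (hℓ0 : 0 < ℓ) (hℓ : ℓ < 1 - 3 * α₀)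
    (hpos : ∀ x, 0 ≤ fH x) (hbv : BoundedVariationOn fH (Set.Icc 0 1))
    (hnorm : ∫ x in Set.Icc (0:ℝ) 1, fH x = 1)
    (heig : P ((Set.Icc (0:ℝ) 1 \ Set.Ioo a b).indicator fH) = fun x => eH * fH x)
    (heH : 1 - ℓ ≤ eH) :
    1 - eH ≤ (1 + (2 * α₀ + B₀) / (1 - ℓ - 3 * α₀)) * (volume (Set.Ioo a b)).toReal :=
  escape_rate_explicit_bound_general P α₀ B₀ ℓ hα₀ hB₀ hLY hint a b hab fH eH hℓ hpos hbv hnorm heig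
    heH
end
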